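/- arXiv:2305.10165 — 8 statements merged into one kernel-verified Lean document; each statement's English description precedes it below -/
import Mathlib

section
/- A square real matrix A is a P-matrix (all principal minors positive) if and only if for every nonzero vector y in R^n there exists an index i such that y_i * (Ay)_i > 0. -/
open Matrix

/-- A square real matrix is a P-matrix if all of its principal minors are positive. -/
def IsPMatrix {n : ℕ} (A : Matrix (Fin n) (Fin n) ℝ) : Prop :=
  ∀ S : Finset (Fin n), S.Nonempty →
    0 < (A.submatrix (fun i : S => (i : Fin n)) (fun j : S => (j : Fin n))).det

/-- Auxiliary: all principal minors, indexed by injective enumerations, are positive. -/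
def GoodDet {m : Type*} [Fintype m] [DecidableEq m] (A : Matrix m m ℝ) : Prop :=
  ∀ (k : ℕ) (f : Fin k → m), Function.Injective f → 0 < (A.submatrix f f).det

lemma GoodDet.sub {m : Type*} [Fintype m] [DecidableEq m] {A : Matrix m m ℝ}
    (hA : GoodDet A) {k : ℕ} {f : Fin k → m} (hf : Function.Injective f) :
    GoodDet (A.submatrix f f) := by
  intro j g hg
  rw [Matrix.submatrix_submatrix]
  exact hA j (f ∘ g) (hf.comp hg)

lemma det_updateRow_single {m : ℕ} (M : Matrix (Fin (m+1)) (Fin (m+1)) ℝ) (i : Fin (m+1)) :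
    (M.updateRow i (Pi.single i 1)).det = (M.submatrix i.succAbove i.succAbove).det := by
  rw [Matrix.det_succ_row _ i, Finset.sum_eq_single i]
  · have hsub : (M.updateRow i (Pi.single i 1)).submatrix i.succAbove i.succAbove
        = M.submatrix i.succAbove i.succAbove := by
      ext a b
      simp [Matrix.updateRow_ne (Fin.succAbove_ne i a)]
    have heven : Even ((i : ℕ) + (i : ℕ)) := ⟨(i : ℕ), rfl⟩
    simp [hsub, heven.neg_one_pow]
  · intro j _ hj
    simp [Pi.single_eq_of_ne hj]
  · intro h
    exact absurd (Finset.mem_univ i) h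

lemma submatrix_diagonal' {l m : Type*} [DecidableEq m] [DecidableEq l] (d : m → ℝ)
    (f : l → m) (hf : Function.Injective f) :
    (Matrix.diagonal d).submatrix f f = Matrix.diagonal (d ∘ f) := by
  ext a b
  by_cases h : a = b
  · subst h; simp
  · simp [Matrix.diagonal_apply_ne _ h, Matrix.diagonal_apply_ne _ (fun hc => h (hf hc)),
      Matrix.submatrix_apply]

lemma det_add_diagonal_pos : ∀ (k : ℕ) (A : Matrix (Fin k) (Fin k) ℝ), GoodDet A →
    ∀ d : Fin k → ℝ, (∀ i, 0 ≤ d i) → 0 < (A + Matrix.diagonal d).det := by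
  intro k
  induction k using Nat.strong_induction_on with
  | _ k IH =>
    match k with
    | 0 =>
      intro A hA d hd
      simp [Matrix.det_fin_zero]
    | (m+1) =>
      intro A hA
      suffices h : ∀ s : Finset (Fin (m+1)), ∀ d : Fin (m+1) → ℝ, (∀ i, 0 ≤ d i) →
          (∀ i, i ∉ s → d i = 0) → 0 < (A + Matrix.diagonal d).det by
        intro d hd
        exact h Finset.univ d hd (fun i hi => absurd (Finset.mem_univ i) hi)
      intro s
      induction s using Finset.induction_on with
      | empty =>
        intro d hd h0
        have hd0 : d = 0 := funext fun i => h0 i (Finset.notMem_empty i)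
        have := hA (m+1) id Function.injective_id
        have hdg : Matrix.diagonal (0 : Fin (m+1) → ℝ) = 0 := by
          ext p q
          simp [Matrix.diagonal_apply]
        rw [hd0, hdg, add_zero]
        simpa using this
      | @insert a s ha IH2 =>
        intro d hd h0
        set d' := Function.update d a 0 with hd'def
        have hd'nonneg : ∀ i, 0 ≤ d' i := by
          intro i
          by_cases hia : i = a
          · subst hia; simp [hd'def]
          · simpa [hd'def, Function.update_of_ne hia] using hd i
        have hd'supp : ∀ i, i ∉ s → d' i = 0 := by
          intro i hi
          by_cases hia : i = a
          · subst hia; simp [hd'def]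
          · rw [hd'def, Function.update_of_ne hia]
            exact h0 i (by simp [hia, hi])
        set B := A + Matrix.diagonal d' with hBdef
        have hrow : A + Matrix.diagonal d
            = B.updateRow a (B a + d a • (Pi.single a 1 : Fin (m+1) → ℝ)) := by
          ext i j
          by_cases hia : i = a
          · subst hia
            rw [Matrix.updateRow_self]
            by_cases hj : i = j
            · subst hj
              simp [hBdef, hd'def, Matrix.diagonal_apply, Pi.single_eq_same]
            · simp [hBdef, hd'def, Matrix.diagonal_apply, hj,
                Pi.single_eq_of_ne (Ne.symm hj)]
          · rw [Matrix.updateRow_ne hia]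
            by_cases hj : i = j
            · subst hj
              simp [hBdef, hd'def, Matrix.diagonal_apply, Function.update_of_ne hia]
            · simp [hBdef, Matrix.diagonal_apply, hj]
        have hBpos : 0 < B.det := IH2 d' hd'nonneg hd'supp
        have hminor : 0 < (B.submatrix a.succAbove a.succAbove).det := by
          have hinj : Function.Injective a.succAbove := Fin.succAbove_right_injective
          have hBsub : B.submatrix a.succAbove a.succAbove
              = A.submatrix a.succAbove a.succAbove + Matrix.diagonal (d' ∘ a.succAbove) := by
            ext p q
            by_cases hpq : p = q
            · subst hpq
              simp [hBdef, Matrix.diagonal_apply_eq, Function.comp]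
            · simp [hBdef, Matrix.diagonal_apply_ne _ hpq,
                Matrix.diagonal_apply_ne _ (fun hc => hpq (hinj hc))]
          rw [hBsub]
          exact IH m (Nat.lt_succ_self m) _ (hA.sub hinj) _ (fun i => hd'nonneg _)
        have hsplit : (A + Matrix.diagonal d).det
            = B.det + d a * (B.updateRow a (Pi.single a 1 : _)).det := by
          rw [hrow, Matrix.det_updateRow_add, Matrix.det_updateRow_smul,
            Matrix.updateRow_eq_self]
        rw [hsplit, det_updateRow_single]
        have : 0 ≤ d a * (B.submatrix a.succAbove a.succAbove).det :=
          mul_nonneg (hd a) hminor.le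
        linarith

lemma isPMatrix_goodDet {n : ℕ} {A : Matrix (Fin n) (Fin n) ℝ} (hA : IsPMatrix A) :
    GoodDet A := by
  intro k f hf
  rcases Nat.eq_zero_or_pos k with hk | hk
  · subst hk
    simp [Matrix.det_fin_zero]
  · classical
    set T : Finset (Fin n) := Finset.image f Finset.univ with hT
    have hmem : ∀ i, f i ∈ T := fun i => Finset.mem_image_of_mem f (Finset.mem_univ _)
    have hTne : T.Nonempty := ⟨f ⟨0, hk⟩, hmem _⟩
    have hpos := hA T hTne
    let f' : Fin k → T := fun i => ⟨f i, hmem i⟩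
    have hbij : Function.Bijective f' := by
      constructor
      · intro i j h
        exact hf (congrArg Subtype.val h)
      · rintro ⟨x, hx⟩
        rw [hT, Finset.mem_image] at hx
        obtain ⟨i, _, hi⟩ := hx
        exact ⟨i, Subtype.ext hi⟩
    let e := Equiv.ofBijective f' hbij
    have hsub : A.submatrix f f
        = (A.submatrix (fun i : T => (i : Fin n)) (fun j : T => (j : Fin n))).submatrix e e := by
      rw [Matrix.submatrix_submatrix]
      rfl
    rw [hsub, Matrix.det_submatrix_equiv_self]
    exact hpos

lemma det_pos_of_nonreversal {m : Type*} [Fintype m] [DecidableEq m] (B : Matrix m m ℝ)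
    (h : ∀ y : m → ℝ, y ≠ 0 → ∃ i, y i * B.mulVec y i > 0) : 0 < B.det := by
  classical
  set F : ℝ → ℝ := fun t => (t • B + (1 - t) • (1 : Matrix m m ℝ)).det with hF
  have hc : Continuous F := by
    apply Continuous.matrix_det
    fun_prop
  have hne : ∀ t ∈ Set.Icc (0:ℝ) 1, F t ≠ 0 := by
    rintro t ⟨ht0, ht1⟩ hdet
    obtain ⟨y, hy0, hy⟩ := Matrix.exists_mulVec_eq_zero_iff.mpr hdet
    obtain ⟨i, hi⟩ := h y hy0
    have hyi : y i ≠ 0 := by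
      intro h'
      rw [h'] at hi
      simp at hi
    have hmv : (t • B + (1 - t) • (1 : Matrix m m ℝ)) *ᵥ y
        = t • (B *ᵥ y) + (1 - t) • y := by
      rw [Matrix.add_mulVec, Matrix.smul_mulVec, Matrix.smul_mulVec,
        Matrix.one_mulVec]
    rw [hy] at hmv
    have hzero : t * (B *ᵥ y) i + (1 - t) * y i = 0 := by
      have := congrFun hmv.symm i
      simpa using this
    have hsq : 0 < y i * y i := mul_self_pos.mpr hyi
    nlinarith [hi, hsq, mul_nonneg ht0 hi.le,
      mul_nonneg (by linarith : (0:ℝ) ≤ 1 - t) hsq.le,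
      congrArg (fun r => y i * r) hzero]
  have hF0 : F 0 = 1 := by simp [hF]
  have hF1 : F 1 = B.det := by simp [hF]
  by_contra hle
  push_neg at hle
  have hF1ne : F 1 ≠ 0 := hne 1 ⟨by norm_num, le_refl 1⟩
  have hF1lt : F 1 < 0 := lt_of_le_of_ne (hF1 ▸ hle) hF1ne
  have hmemI : (0:ℝ) ∈ Set.Icc (F 1) (F 0) := ⟨hF1lt.le, by rw [hF0]; norm_num⟩
  obtain ⟨t, htI, hFt⟩ :=
    intermediate_value_Icc' (by norm_num : (0:ℝ) ≤ 1) hc.continuousOn hmemI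
  exact hne t htI hFt

/-- Gale–Nikaido: A is a P-matrix iff it does not reverse the sign of any nonzero vector. -/
theorem isPMatrix_iff_sign_nonreversal {n : ℕ} (A : Matrix (Fin n) (Fin n) ℝ) :
    IsPMatrix A ↔ ∀ y : Fin n → ℝ, y ≠ 0 → ∃ i, y i * A.mulVec y i > 0 := by
  classical
  constructor
  · -- P-matrix ⇒ sign nonreversal
    intro hA y hy
    by_contra hcon
    push_neg at hcon
    have hcon' : ∀ i, y i * A.mulVec y i ≤ 0 := hcon
    set S : Finset (Fin n) := Finset.univ.filter (fun i => y i ≠ 0) with hSdef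
    have hSne : S.Nonempty := by
      obtain ⟨i, hi⟩ := Function.ne_iff.mp hy
      exact ⟨i, Finset.mem_filter.mpr ⟨Finset.mem_univ i, by simpa using hi⟩⟩
    set k := S.card with hk
    have hkpos : 0 < k := Finset.card_pos.mpr hSne
    set f : Fin k → Fin n := fun i => ((S.orderIsoOfFin rfl i : S) : Fin n) with hf
    have hfinj : Function.Injective f :=
      Subtype.val_injective.comp (S.orderIsoOfFin rfl).injective
    have hfS : ∀ i, f i ∈ S := fun i => (S.orderIsoOfFin rfl i).2
    have hyf : ∀ i, y (f i) ≠ 0 := by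
      intro i
      have := hfS i
      rw [hSdef, Finset.mem_filter] at this
      exact this.2
    have himg : Finset.image f Finset.univ = S := by
      apply Finset.eq_of_subset_of_card_le
      · intro x hx
        rw [Finset.mem_image] at hx
        obtain ⟨i, _, hi⟩ := hx
        exact hi ▸ hfS i
      · rw [Finset.card_image_of_injective _ hfinj, Finset.card_univ, Fintype.card_fin]
    have hzoff : ∀ j, j ∉ S → y j = 0 := by
      intro j hj
      rw [hSdef, Finset.mem_filter] at hj
      push_neg at hj
      exact hj (Finset.mem_univ j)
    set B := A.submatrix f f with hB
    have hGood : GoodDet B := (isPMatrix_goodDet hA).sub hfinj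
    set d : Fin k → ℝ := fun i => -(A.mulVec y (f i) / y (f i)) with hd
    have hdnonneg : ∀ i, 0 ≤ d i := by
      intro i
      have hw := hyf i
      have hle := hcon' (f i)
      rw [hd]
      rw [neg_nonneg]
      rcases lt_or_gt_of_ne hw with hneg | hpos
      · apply div_nonpos_of_nonneg_of_nonpos _ hneg.le
        nlinarith
      · apply div_nonpos_of_nonpos_of_nonneg _ hpos.le
        nlinarith
    have hker : (B + Matrix.diagonal d) *ᵥ (y ∘ f) = 0 := by
      funext i
      have hsum : (B *ᵥ (y ∘ f)) i = A.mulVec y (f i) := by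
        have h1 : (B *ᵥ (y ∘ f)) i = ∑ j : Fin k, A (f i) (f j) * y (f j) := by
          simp [hB, Matrix.mulVec, dotProduct, Matrix.submatrix_apply,
            Function.comp]
        have h2 : ∑ j : Fin k, A (f i) (f j) * y (f j)
            = ∑ j ∈ S, A (f i) j * y j := by
          rw [← himg, Finset.sum_image (fun a _ b _ hab => hfinj hab)]
        have h3 : ∑ j ∈ S, A (f i) j * y j = ∑ j : Fin n, A (f i) j * y j := by
          apply Finset.sum_subset (Finset.subset_univ S)
          intro j _ hj
          rw [hzoff j hj, mul_zero]
        rw [h1, h2, h3]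
        simp [Matrix.mulVec, dotProduct]
      have hdiag : (Matrix.diagonal d *ᵥ (y ∘ f)) i = d i * y (f i) := by
        simp [Matrix.mulVec_diagonal, Function.comp]
      rw [Matrix.add_mulVec, Pi.add_apply, hsum, hdiag, hd]
      simp only [Pi.zero_apply]
      rw [neg_mul, div_mul_cancel₀ _ (hyf i), add_neg_cancel]
    have hdet0 : (B + Matrix.diagonal d).det = 0 := by
      apply Matrix.exists_mulVec_eq_zero_iff.mp
      refine ⟨y ∘ f, ?_, hker⟩
      intro hzero
      exact hyf ⟨0, hkpos⟩ (congrFun hzero ⟨0, hkpos⟩)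
    have hpos := det_add_diagonal_pos k B hGood d hdnonneg
    rw [hdet0] at hpos
    exact lt_irrefl 0 hpos
  · -- sign nonreversal ⇒ P-matrix
    intro h S hSne
    apply det_pos_of_nonreversal
    intro y hy0
    set Y : Fin n → ℝ := fun j => if hj : j ∈ S then y ⟨j, hj⟩ else 0 with hY
    have hY0 : Y ≠ 0 := by
      obtain ⟨i, hi⟩ := Function.ne_iff.mp hy0
      intro hz
      apply hi
      have := congrFun hz (i : Fin n)
      simpa [hY, i.2] using this
    obtain ⟨i, hi⟩ := h Y hY0
    have hYi : Y i ≠ 0 := by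
      intro h'
      rw [h'] at hi
      simp at hi
    have hiS : i ∈ S := by
      by_contra hiS
      exact hYi (by simp [hY, hiS])
    refine ⟨⟨i, hiS⟩, ?_⟩
    have hyY : y ⟨i, hiS⟩ = Y i := by simp [hY, hiS]
    have hmv : (A.submatrix (fun i : S => (i : Fin n)) (fun j : S => (j : Fin n)) *ᵥ y) ⟨i, hiS⟩
        = A.mulVec Y i := by
      have h1 : (A.submatrix (fun i : S => (i : Fin n)) (fun j : S => (j : Fin n)) *ᵥ y) ⟨i, hiS⟩
          = ∑ j : S, A i (j : Fin n) * y j := by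
        simp [Matrix.mulVec, dotProduct, Matrix.submatrix_apply]
      have h2 : ∑ j : S, A i (j : Fin n) * y j = ∑ j ∈ S, A i j * Y j := by
        rw [← Finset.sum_coe_sort S (fun j => A i j * Y j)]
        apply Finset.sum_congr rfl
        intro j _
        congr 1
        simp [hY, j.2]
      have h3 : ∑ j ∈ S, A i j * Y j = ∑ j : Fin n, A i j * Y j := by
        apply Finset.sum_subset (Finset.subset_univ S)
        intro j _ hj
        simp [hY, hj]
      rw [h1, h2, h3]
      simp [Matrix.mulVec, dotProduct]
    rw [hyY, hmv]
    exact hi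
end

section
/- If A is an n×n real P-matrix, then A is invertible and its inverse is also a P-matrix. -/
/-- A P-matrix is invertible and its inverse is a P-matrix. -/
theorem isPMatrix_inv {n : ℕ} (A : Matrix (Fin n) (Fin n) ℝ) (hA : IsPMatrix A) :
    IsUnit A.det ∧ IsPMatrix A⁻¹ := by
  classical
  have hdet : ∀ T : Finset (Fin n),
      0 < (A.submatrix (fun i : T => (i : Fin n)) (fun j : T => (j : Fin n))).det := by
    intro T
    rcases T.eq_empty_or_nonempty with rfl | h
    · simp [Matrix.det_isEmpty]
    · exact hA T h
  have hAdet : 0 < A.det := by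
    have h := hdet Finset.univ
    rwa [show (fun i : (Finset.univ : Finset (Fin n)) => (i : Fin n)) =
        ⇑(Equiv.subtypeUnivEquiv (fun x => Finset.mem_univ x)) from rfl,
      Matrix.det_submatrix_equiv_self] at h
  refine ⟨isUnit_iff_ne_zero.2 hAdet.ne', ?_⟩
  intro S hS
  let e : {x : Fin n // x ∈ S} ⊕ {x : Fin n // x ∉ S} ≃ Fin n := Equiv.sumCompl (· ∈ S)
  let A11 : Matrix {x : Fin n // x ∈ S} {x : Fin n // x ∈ S} ℝ := A.submatrix (·.1) (·.1)
  let A12 : Matrix {x : Fin n // x ∈ S} {x : Fin n // x ∉ S} ℝ := A.submatrix (·.1) (·.1)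
  let A21 : Matrix {x : Fin n // x ∉ S} {x : Fin n // x ∈ S} ℝ := A.submatrix (·.1) (·.1)
  let A22 : Matrix {x : Fin n // x ∉ S} {x : Fin n // x ∉ S} ℝ := A.submatrix (·.1) (·.1)
  have hB : A.submatrix e e = Matrix.fromBlocks A11 A12 A21 A22 := by
    ext i j; cases i <;> cases j <;> rfl
  let eC : {x : Fin n // x ∈ Sᶜ} ≃ {x : Fin n // x ∉ S} :=
    Equiv.subtypeEquivRight (fun x => Finset.mem_compl)
  have h22 : 0 < A22.det := by
    have h := hdet Sᶜ
    rwa [show (A.submatrix (fun i : (Sᶜ : Finset (Fin n)) => (i : Fin n))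
        (fun j : (Sᶜ : Finset (Fin n)) => (j : Fin n))) = A22.submatrix ⇑eC ⇑eC from rfl,
      Matrix.det_submatrix_equiv_self] at h
  haveI iA22 : Invertible A22 := A22.invertibleOfIsUnitDet (isUnit_iff_ne_zero.2 h22.ne')
  have hdetB : A.det = A22.det * (A11 - A12 * ⅟A22 * A21).det := by
    rw [← Matrix.det_submatrix_equiv_self e A, hB, Matrix.det_fromBlocks₂₂]
  have hSchur : 0 < (A11 - A12 * ⅟A22 * A21).det := by
    nlinarith [hdetB, hAdet, h22]
  haveI iS : Invertible (A11 - A12 * ⅟A22 * A21) :=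
    Matrix.invertibleOfIsUnitDet _ (isUnit_iff_ne_zero.2 hSchur.ne')
  haveI iB : Invertible (Matrix.fromBlocks A11 A12 A21 A22) :=
    Matrix.fromBlocks₂₂Invertible _ _ _ _
  have key : (A⁻¹).submatrix (fun i : S => (i : Fin n)) (fun j : S => (j : Fin n))
      = ((A.submatrix e e)⁻¹).toBlocks₁₁ := by
    rw [Matrix.inv_submatrix_equiv]; rfl
  rw [key, hB, ← Matrix.invOf_eq_nonsing_inv, Matrix.invOf_fromBlocks₂₂_eq,
    Matrix.toBlocks_fromBlocks₁₁, Matrix.invOf_eq_nonsing_inv, Matrix.det_nonsing_inv,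
    Ring.inverse_eq_inv]
  exact inv_pos.2 hSchur
end

section
/- If B is an n×n real P-matrix, then there exists a strictly positive row vector λ ∈ R^n (all components > 0) such that every component of λB is strictly positive. -/
/-- det of the matrix whose rows off `S` are standard basis vectors equals the principal minor. -/
lemma det_piecewise_single {ι : Type*} [Fintype ι] [DecidableEq ι]
    (A : Matrix ι ι ℝ) (S : Finset ι) :
    (Matrix.of (S.piecewise (A : ι → ι → ℝ) (fun i => Pi.single i (1:ℝ)))).det
      = (A.submatrix (fun i : S => (i : ι)) (fun j : S => (j : ι))).det := by
  classical
  set M : Matrix ι ι ℝ := Matrix.of (S.piecewise (A : ι → ι → ℝ) (fun i => Pi.single i (1:ℝ)))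
    with hM
  have h1 : M.submatrix (Equiv.sumCompl (· ∈ S)) (Equiv.sumCompl (· ∈ S)) =
      Matrix.fromBlocks (A.submatrix (fun i : S => (i : ι)) (fun j : S => (j : ι)))
        (A.submatrix (fun i : S => (i : ι)) (fun j : {a // a ∉ S} => (j : ι)))
        0 1 := by
    ext i j
    cases i with
    | inl i =>
      cases j with
      | inl j => simp [hM, Finset.piecewise, i.2]
      | inr j => simp [hM, Finset.piecewise, i.2]
    | inr i =>
      cases j with
      | inl j =>
        have hne : (j : ι) ≠ (i : ι) := fun h => i.2 (h ▸ j.2)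
        simp [hM, Finset.piecewise, i.2, Pi.single_apply, hne]
      | inr j =>
        by_cases h : (j : ι) = (i : ι)
        · have h2 : i = j := Subtype.ext h.symm
          simp [hM, Finset.piecewise, i.2, Pi.single_apply, h, h2, Matrix.one_apply]
        · have h2 : i ≠ j := fun hh => h (by rw [hh])
          simp [hM, Finset.piecewise, i.2, Pi.single_apply, h, Matrix.one_apply, h2]
  calc M.det = (M.submatrix (Equiv.sumCompl (· ∈ S)) (Equiv.sumCompl (· ∈ S))).det :=
        (Matrix.det_submatrix_equiv_self _ M).symm
    _ = _ := by rw [h1, Matrix.det_fromBlocks_zero₂₁]; simp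

/-- All principal minors (including the empty one) positive. -/
def PosMinors {ι : Type*} [Fintype ι] [DecidableEq ι] (A : Matrix ι ι ℝ) : Prop :=
  ∀ S : Finset ι, 0 < (A.submatrix (fun i : S => (i : ι)) (fun j : S => (j : ι))).det

lemma det_add_diagonal_pos_s2 {ι : Type*} [Fintype ι] [DecidableEq ι]
    {A : Matrix ι ι ℝ} (hA : PosMinors A) {d : ι → ℝ} (hd : ∀ i, 0 ≤ d i) :
    0 < (A + Matrix.diagonal d).det := by
  classical
  set R : ι → ι → ℝ := fun i j => A i j with hR
  set E : ι → ι → ℝ := fun i => d i • (Pi.single i (1:ℝ) : ι → ℝ) with hE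
  have hrows : (A + Matrix.diagonal d) = Matrix.of (R + E) := by
    ext i j
    rcases eq_or_ne i j with h | h
    · subst h; simp [hR, hE, Matrix.diagonal_apply_eq, Pi.single_apply]
    · simp [hR, hE, Matrix.diagonal_apply_ne _ h, Pi.single_apply, h, Ne.symm h]
  have key : (A + Matrix.diagonal d).det
      = ∑ S : Finset ι, (∏ i ∈ Sᶜ, d i) *
          (A.submatrix (fun i : S => (i : ι)) (fun j : S => (j : ι))).det := by
    rw [hrows]
    set f := (Matrix.detRowAlternating : AlternatingMap ℝ (ι → ℝ) ℝ ι).toMultilinearMap with hf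
    show f (R + E) = _
    rw [f.map_add_univ R E]
    refine Finset.sum_congr rfl fun S _ => ?_
    have h1 : S.piecewise R E
        = Sᶜ.piecewise (fun i => d i • ((Sᶜ.piecewise (fun i => (Pi.single i (1:ℝ) : ι → ℝ)) R : ι → ι → ℝ) i))
            (Sᶜ.piecewise (fun i => Pi.single i (1:ℝ)) R) := by
      funext i
      by_cases h : i ∈ S <;> simp [hE, Finset.piecewise, h]
    rw [h1, f.map_piecewise_smul]
    have h2 : Sᶜ.piecewise (fun i => Pi.single i (1:ℝ)) R
        = S.piecewise R (fun i => Pi.single i (1:ℝ)) := by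
      funext i; by_cases h : i ∈ S <;> simp [Finset.piecewise, h]
    rw [h2]
    have h3 : f (S.piecewise R (fun i => Pi.single i (1:ℝ)))
        = (A.submatrix (fun i : S => (i : ι)) (fun j : S => (j : ι))).det :=
      det_piecewise_single A S
    rw [h3, smul_eq_mul]
  rw [key]
  refine Finset.sum_pos' (fun S _ => ?_) ⟨Finset.univ, Finset.mem_univ _, ?_⟩
  · exact mul_nonneg (Finset.prod_nonneg fun i _ => hd i) (le_of_lt (hA S))
  · simpa using mul_pos (by simp : (0:ℝ) < ∏ i ∈ (Finset.univ : Finset ι)ᶜ, d i)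
      (hA Finset.univ)

lemma posMinors_submatrix {ι : Type*} [Fintype ι] [DecidableEq ι] {A : Matrix ι ι ℝ}
    (hA : PosMinors A) (S : Finset ι) :
    PosMinors (A.submatrix (fun i : S => (i : ι)) (fun j : S => (j : ι))) := by
  classical
  intro T
  have hinj : Function.Injective (fun x : T => (⟨((x : S) : ι),
      Finset.mem_image_of_mem (fun a : S => (a : ι)) x.2⟩ :
        {y // y ∈ T.image (fun a : S => (a : ι))})) := by
    intro a b h
    exact Subtype.ext (Subtype.ext (by simpa using congrArg Subtype.val h))
  have hsurj : Function.Surjective (fun x : T => (⟨((x : S) : ι),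
      Finset.mem_image_of_mem (fun a : S => (a : ι)) x.2⟩ :
        {y // y ∈ T.image (fun a : S => (a : ι))})) := by
    rintro ⟨y, hy⟩
    obtain ⟨a, ha, rfl⟩ := Finset.mem_image.mp hy
    exact ⟨⟨a, ha⟩, rfl⟩
  have hmat : ((A.submatrix (fun i : S => (i : ι)) (fun j : S => (j : ι))).submatrix
        (fun i : T => (i : S)) (fun j : T => (j : S)))
      = (A.submatrix (fun i : {y // y ∈ T.image (fun a : S => (a : ι))} => (i : ι))
          (fun j : {y // y ∈ T.image (fun a : S => (a : ι))} => (j : ι))).submatrix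
          (Equiv.ofBijective _ ⟨hinj, hsurj⟩) (Equiv.ofBijective _ ⟨hinj, hsurj⟩) := rfl
  rw [hmat, Matrix.det_submatrix_equiv_self]
  exact hA (T.image (fun a : S => (a : ι)))

lemma posMinors_no_reversal {ι : Type*} [Fintype ι] [DecidableEq ι] {B : Matrix ι ι ℝ}
    (hB : PosMinors B) {y : ι → ℝ} (hy : ∀ i, 0 ≤ y i)
    (hBy : ∀ i, B.mulVec y i ≤ 0) : y = 0 := by
  classical
  by_contra hne
  set S : Finset ι := Finset.univ.filter (fun i => y i ≠ 0) with hS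
  have hySne : ∀ i : S, y i ≠ 0 := fun i => (Finset.mem_filter.mp i.2).2
  set A : Matrix S S ℝ := B.submatrix (fun i : S => (i : ι)) (fun j : S => (j : ι)) with hA
  set d : S → ℝ := fun i => -(B.mulVec y (i : ι)) / y (i : ι) with hd
  have hd0 : ∀ i, 0 ≤ d i := fun i =>
    div_nonneg (neg_nonneg.mpr (hBy i)) (hy i)
  set z : S → ℝ := fun i => y (i : ι) with hz
  have hz0 : z ≠ 0 := by
    obtain ⟨k, hk⟩ := Function.ne_iff.mp hne
    have hkS : k ∈ S := Finset.mem_filter.mpr ⟨Finset.mem_univ _, by simpa using hk⟩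
    intro h
    exact hySne ⟨k, hkS⟩ (by simpa using congrFun h ⟨k, hkS⟩)
  have hker : (A + Matrix.diagonal d).mulVec z = 0 := by
    funext i
    have hsum : ∑ j : S, B (i : ι) (j : ι) * y (j : ι) = B.mulVec y (i : ι) := by
      rw [Finset.sum_coe_sort S (fun j => B (i : ι) j * y j)]
      rw [Matrix.mulVec, dotProduct]
      refine Finset.sum_subset (Finset.subset_univ S) fun j _ hj => ?_
      have : y j = 0 := by
        by_contra h
        exact hj (Finset.mem_filter.mpr ⟨Finset.mem_univ _, h⟩)
      simp [this]
    have : (A + Matrix.diagonal d).mulVec z i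
        = (∑ j : S, B (i : ι) (j : ι) * y (j : ι)) + d i * y (i : ι) := by
      rw [Matrix.add_mulVec]
      simp only [Pi.add_apply, Matrix.mulVec_diagonal]
      congr 1
    rw [this, hsum, hd]
    show B.mulVec y ↑i + -B.mulVec y ↑i / y ↑i * y ↑i = 0
    rw [div_mul_cancel₀ _ (hySne i)]
    exact add_neg_cancel _
  have hdet0 : (A + Matrix.diagonal d).det = 0 :=
    Matrix.exists_mulVec_eq_zero_iff.mp ⟨z, hz0, hker⟩
  have := det_add_diagonal_pos_s2 (posMinors_submatrix hB S) hd0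
  rw [hdet0] at this
  exact lt_irrefl 0 this

/-- For a P-matrix B there is a strictly positive row vector λ with λB strictly positive. -/
theorem exists_pos_vecMul_pos {n : ℕ} (B : Matrix (Fin n) (Fin n) ℝ) (hB : IsPMatrix B) :
    ∃ lam : Fin n → ℝ, (∀ i, 0 < lam i) ∧ ∀ j, 0 < Matrix.vecMul lam B j := by
  classical
  rcases Nat.eq_zero_or_pos n with hn | hn
  · subst hn
    exact ⟨fun _ => 1, fun i => i.elim0, fun j => j.elim0⟩
  have hPM : PosMinors B := by
    intro S
    rcases S.eq_empty_or_nonempty with rfl | hS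
    · haveI : IsEmpty ((∅ : Finset (Fin n)) : Type) := Finset.isEmpty_coe_sort.mpr rfl
      simp [Matrix.det_isEmpty]
    · exact hB S hS
  -- separation
  set s : Set (Fin n → ℝ) := B.mulVecLin '' stdSimplex ℝ (Fin n) with hs
  set t : Set (Fin n → ℝ) := Set.pi Set.univ (fun _ : Fin n => Set.Iic (0:ℝ)) with ht
  have hs₁ : Convex ℝ s := (convex_stdSimplex ℝ (Fin n)).linear_image B.mulVecLin
  have hs₂ : IsCompact s :=
    (isCompact_stdSimplex _ _).image B.mulVecLin.continuous_of_finiteDimensional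
  have ht₁ : Convex ℝ t := convex_pi fun _ _ => convex_Iic 0
  have ht₂ : IsClosed t := isClosed_set_pi fun _ _ => isClosed_Iic
  have disj : Disjoint s t := by
    rw [Set.disjoint_left]
    rintro a ⟨y, hy, rfl⟩ hat
    have hy0 : y = 0 := by
      refine posMinors_no_reversal hPM (fun i => hy.1 i) (fun i => ?_)
      have := hat i (Set.mem_univ i)
      simpa [Matrix.mulVecLin_apply] using this
    have := hy.2
    rw [hy0] at this
    simp at this
  obtain ⟨f, u, v, hfs, huv, hft⟩ :=
    geometric_hahn_banach_compact_closed hs₁ hs₂ ht₁ ht₂ disj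
  have h0t : (0 : Fin n → ℝ) ∈ t := by intro i _; simp
  have hv0 : v < 0 := by simpa using hft 0 h0t
  -- f is nonnegative on the nonpositive orthant
  have hfnn : ∀ b ∈ t, 0 ≤ f b := by
    intro b hb
    by_contra hneg
    push_neg at hneg
    set c : ℝ := (v - 1) / f b with hc
    have hcpos : 0 < c := div_pos_of_neg_of_neg (by linarith) hneg
    have hcb : c • b ∈ t := by
      intro i _
      have : b i ≤ 0 := hb i (Set.mem_univ i)
      exact mul_nonpos_of_nonneg_of_nonpos hcpos.le this
    have h1 : v < f (c • b) := hft _ hcb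
    rw [map_smul, smul_eq_mul] at h1
    rw [hc] at h1
    rw [div_mul_cancel₀ _ (ne_of_lt hneg)] at h1
    linarith
  set lam0 : Fin n → ℝ := fun i => -f (Pi.single i 1) with hlam0
  have hlam0nn : ∀ i, 0 ≤ lam0 i := by
    intro i
    have hmem : (-(Pi.single i 1) : Fin n → ℝ) ∈ t := by
      intro j _
      simp [Pi.single_apply]
      split <;> norm_num
    have := hfnn _ hmem
    rw [map_neg] at this
    simpa [hlam0] using this
  have hexp : ∀ x : Fin n → ℝ, f x = ∑ i, x i * f (Pi.single i 1) := by
    intro x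
    have hx : x = ∑ i, x i • (Pi.single i 1 : Fin n → ℝ) := by
      funext j
      simp [Pi.single_apply, Finset.sum_ite_eq']
    conv_lhs => rw [hx]
    rw [map_sum]
    simp [smul_eq_mul]
  have hc : ∀ j, 0 < ∑ i, lam0 i * B i j := by
    intro j
    have hmem : (Pi.single j 1 : Fin n → ℝ) ∈ stdSimplex ℝ (Fin n) := by
      constructor
      · intro i
        simp [Pi.single_apply]
        split <;> norm_num
      · simp [Pi.single_apply, Finset.sum_ite_eq']
    have hmem2 : B.mulVecLin (Pi.single j 1) ∈ s := ⟨_, hmem, rfl⟩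
    have h1 : f (B.mulVecLin (Pi.single j 1)) < u := hfs _ hmem2
    have h2 : f (B.mulVecLin (Pi.single j 1)) < 0 := by linarith
    rw [hexp] at h2
    have h3 : ∀ i, (B.mulVecLin (Pi.single j 1)) i = B i j := by
      intro i
      simp [Matrix.mulVecLin_apply, Matrix.mulVec_single]
    have h4 : ∑ i, (B.mulVecLin (Pi.single j 1)) i * f (Pi.single i 1)
        = -∑ i, lam0 i * B i j := by
      rw [← Finset.sum_neg_distrib]
      refine Finset.sum_congr rfl fun i _ => ?_
      rw [h3 i, hlam0]
      ring
    rw [h4] at h2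
    linarith
  -- perturb to strict positivity
  have hne : (Finset.univ : Finset (Fin n)).Nonempty := ⟨⟨0, hn⟩, Finset.mem_univ _⟩
  set c : Fin n → ℝ := fun j => ∑ i, lam0 i * B i j with hcdef
  set m : Fin n → ℝ := fun j => ∑ i, B i j with hmdef
  set δ : ℝ := Finset.univ.inf' hne c with hδdef
  have hδ : 0 < δ := by
    rw [hδdef, Finset.lt_inf'_iff]
    exact fun j _ => hc j
  set M : ℝ := Finset.univ.sup' hne (fun j => |m j|) with hMdef
  have hM0 : 0 ≤ M := le_trans (abs_nonneg (m ⟨0, hn⟩))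
    (Finset.le_sup' (fun j => |m j|) (Finset.mem_univ ⟨0, hn⟩))
  set ε : ℝ := δ / (M + 1) with hεdef
  have hε : 0 < ε := div_pos hδ (by linarith)
  have hεM : ε * M + ε = δ := by
    have h1 : ε * (M + 1) = δ := div_mul_cancel₀ _ (by linarith)
    rw [← h1]; ring
  refine ⟨fun i => lam0 i + ε, fun i => by have := hlam0nn i; show 0 < lam0 i + ε; linarith, fun j => ?_⟩
  have hval : Matrix.vecMul (fun i => lam0 i + ε) B j = c j + ε * m j := by
    simp [Matrix.vecMul, dotProduct, add_mul, Finset.sum_add_distrib,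
      Finset.mul_sum, hcdef, hmdef]
  rw [hval]
  have h1 : δ ≤ c j := Finset.inf'_le _ (Finset.mem_univ _)
  have h2 : |m j| ≤ M := Finset.le_sup' (fun j => |m j|) (Finset.mem_univ j)
  have h3 : ε * |m j| ≤ ε * M := mul_le_mul_of_nonneg_left h2 hε.le
  have h4 : -(ε * |m j|) ≤ ε * m j := by
    have := neg_abs_le (m j)
    nlinarith
  linarith
end

section
/- Let J be an n×n real matrix with spectral radius ρ(J) < 1 such that every principal submatrix of J also has spectral radius < 1. Then I − J is a P-matrix. -/
open Polynomial Filter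

theorem Polynomial.Monic.eval_pos_of_forall_isRoot_lt {p : ℝ[X]} (hp : p.Monic) {a : ℝ}
    (hroots : ∀ x : ℝ, p.IsRoot x → x < a) : 0 < p.eval a := by
  by_contra! hle
  rcases Nat.eq_zero_or_pos p.natDegree with hdeg | hdeg
  · rw [hp.natDegree_eq_zero.mp hdeg, eval_one] at hle
    linarith
  have htop : Tendsto (fun x => p.eval x) atTop atTop :=
    tendsto_atTop_of_leadingCoeff_nonneg p (natDegree_pos_iff_degree_pos.mp hdeg)
      (by rw [hp.leadingCoeff]; exact zero_le_one)
  obtain ⟨b, hb_pos, hab⟩ := ((htop.eventually_gt_atTop 0).and (eventually_ge_atTop a)).exists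
  obtain ⟨x, hx, hroot⟩ := intermediate_value_Icc hab p.continuous.continuousOn
    ⟨hle, hb_pos.le⟩
  exact (hroots x hroot).not_ge hx.1

theorem Matrix.eval_one_charpoly {m R : Type*} [Fintype m] [DecidableEq m] [CommRing R]
    (A : Matrix m m R) : A.charpoly.eval 1 = (1 - A).det := by
  rw [eval_charpoly, map_one]

theorem Matrix.isRoot_charpoly_map {m R S : Type*} [Fintype m] [DecidableEq m] [CommRing R]
    [CommRing S] (f : R →+* S) {A : Matrix m m R} {x : R} (hx : A.charpoly.IsRoot x) :
    (A.map f).charpoly.IsRoot (f x) := by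
  rw [charpoly_map]
  exact hx.map

/-- If every principal submatrix of J (including J itself) has spectral radius < 1,
then I − J is a P-matrix. -/
theorem one_sub_isPMatrix_of_spectralRadius_lt_one {n : ℕ} (J : Matrix (Fin n) (Fin n) ℝ)
    (h : ∀ S : Finset (Fin n), S.Nonempty →
      ∀ μ : ℂ, (Matrix.charpoly
        ((J.submatrix (fun i : S => (i : Fin n)) (fun j : S => (j : Fin n))).map
          (Complex.ofReal))).IsRoot μ → ‖μ‖ < 1) :
    IsPMatrix (1 - J) := by
  intro S hS
  rw [Matrix.submatrix_sub, Pi.sub_apply, Pi.sub_apply, Matrix.submatrix_one _ Subtype.val_injective,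
    ← Matrix.eval_one_charpoly]
  refine (Matrix.charpoly_monic _).eval_pos_of_forall_isRoot_lt fun x hx => ?_
  have hx_lt : ‖(x : ℂ)‖ < 1 := h S hS x (Matrix.isRoot_charpoly_map Complex.ofRealHom hx)
  rw [Complex.norm_real, Real.norm_eq_abs] at hx_lt
  exact (le_abs_self x).trans_lt hx_lt
end

section
/- Let A be an n×n real matrix with A_{ii} = 1 for all i, and suppose there exists a vector h ∈ R^n with h_i > 0 for all i and h_i > Σ_{j≠i} h_j |A_{ij}| for every i (A has a dominant diagonal after scaling). Then A is a P-matrix. -/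
/-!
Scaling the columns of `A` by `h` makes it strictly row diagonally dominant with positive
diagonal; this passes to principal submatrices, and column scaling multiplies each principal
minor by a positive product of entries of `h`. Such dominant matrices form a convex set containing
`1`, on which `det` never vanishes by Gershgorin's theorem, so `det` is positive on all of it.
-/

open Finset Matrix

namespace Matrix

variable {ι m : Type*} [Fintype ι] [DecidableEq ι] [Fintype m] [DecidableEq m]

/-- Unlike the usual diagonal dominance, `B i i` is compared without absolute value, so the
diagonal is positive. -/
def StrictlyRowDominant (B : Matrix m m ℝ) : Prop :=
  ∀ i, ∑ j ∈ univ.erase i, |B i j| < B i i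

theorem strictlyRowDominant_one : StrictlyRowDominant (1 : Matrix m m ℝ) := fun i => by
  rw [sum_eq_zero fun j hj => by simp [one_apply_ne' (ne_of_mem_erase hj)], one_apply_eq]
  exact one_pos

theorem convex_setOf_strictlyRowDominant :
    Convex ℝ {B : Matrix m m ℝ | StrictlyRowDominant B} := by
  intro B hB C hC s t hs ht hst i
  have hoff : ∑ j ∈ univ.erase i, |(s • B + t • C) i j|
      ≤ s * ∑ j ∈ univ.erase i, |B i j| + t * ∑ j ∈ univ.erase i, |C i j| := by
    rw [mul_sum, mul_sum, ← sum_add_distrib]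
    refine sum_le_sum fun j _ => ?_
    simpa [abs_mul, abs_of_nonneg hs, abs_of_nonneg ht] using abs_add_le (s * B i j) (t * C i j)
  have hdiag : s * ∑ j ∈ univ.erase i, |B i j| + t * ∑ j ∈ univ.erase i, |C i j|
      < s * B i i + t * C i i := by
    rcases hs.lt_or_eq with hs | rfl
    · exact add_lt_add_of_lt_of_le (mul_lt_mul_of_pos_left (hB i) hs)
        (mul_le_mul_of_nonneg_left (hC i).le ht)
    · obtain rfl : t = 1 := by simpa using hst
      simpa using hC i
  simpa using hoff.trans_lt hdiag

theorem StrictlyRowDominant.det_ne_zero {B : Matrix m m ℝ} (hB : StrictlyRowDominant B) :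
    B.det ≠ 0 :=
  det_ne_zero_of_sum_row_lt_diag fun i => by
    simpa [Real.norm_eq_abs, abs_of_pos ((sum_nonneg fun _ _ => abs_nonneg _).trans_lt (hB i))]
      using hB i

theorem StrictlyRowDominant.det_pos {B : Matrix m m ℝ} (hB : StrictlyRowDominant B) :
    0 < B.det := by
  by_contra! hle
  obtain ⟨C, hC, hC0⟩ := convex_setOf_strictlyRowDominant.isPreconnected.intermediate_value
    hB strictlyRowDominant_one (continuous_id.matrix_det.continuousOn)
    (⟨hle, by simp⟩ : (0 : ℝ) ∈ Set.Icc B.det (1 : Matrix m m ℝ).det)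
  exact StrictlyRowDominant.det_ne_zero hC hC0

theorem StrictlyRowDominant.submatrix {B : Matrix m m ℝ} (hB : StrictlyRowDominant B)
    (e : ι ↪ m) : StrictlyRowDominant (B.submatrix e e) := fun i =>
  calc ∑ j ∈ univ.erase i, |B (e i) (e j)|
      = ∑ k ∈ (univ.erase i).map e, |B (e i) k| := (sum_map _ e fun k => |B (e i) k|).symm
    _ ≤ ∑ k ∈ univ.erase (e i), |B (e i) k| :=
        sum_le_sum_of_subset_of_nonneg
          (by rw [map_erase]; exact erase_subset_erase _ (subset_univ _))
          fun _ _ _ => abs_nonneg _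
    _ < B (e i) (e i) := hB (e i)

theorem strictlyRowDominant_mul_diagonal_iff {A : Matrix m m ℝ} {d : m → ℝ} (hd : ∀ i, 0 < d i) :
    StrictlyRowDominant (A * diagonal d) ↔
      ∀ i, ∑ j ∈ univ.erase i, d j * |A i j| < A i i * d i := by
  simp only [StrictlyRowDominant, mul_diagonal, abs_mul, abs_of_pos (hd _), mul_comm (|A _ _|)]

end Matrix

/-- A matrix with unit diagonal and (scaled) dominant diagonal is a P-matrix. -/
theorem isPMatrix_of_dominant_diagonal {n : ℕ} (A : Matrix (Fin n) (Fin n) ℝ)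
    (hdiag : ∀ i, A i i = 1)
    (h : ∃ hvec : Fin n → ℝ, (∀ i, 0 < hvec i) ∧
      ∀ i, (∑ j ∈ Finset.univ.erase i, hvec j * |A i j|) < hvec i) :
    IsPMatrix A := by
  obtain ⟨d, hd, hdom⟩ := h
  have hB : (A * diagonal d).StrictlyRowDominant :=
    (strictlyRowDominant_mul_diagonal_iff hd).2 fun i => by simpa [hdiag] using hdom i
  intro S _
  have hsub := (hB.submatrix (Function.Embedding.subtype (· ∈ S))).det_pos
  have hfactor : (A * diagonal d).submatrix ((↑) : S → Fin n) (↑) =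
      A.submatrix (↑) (↑) * diagonal (fun j : S => d j) := by
    ext i j
    simp [mul_diagonal]
  rw [Function.Embedding.coe_subtype, hfactor, det_mul, det_diagonal] at hsub
  exact pos_of_mul_pos_left hsub (prod_pos fun (j : S) _ => hd j).le
end

section
/- Let F : R^n → R^n be continuously differentiable with Jacobian DF(u) a P-matrix for every u. Then F is injective. -/
open Finset Filter Topology Matrix

namespace Matrix

theorem det_add_diagonal {ι R : Type*} [Fintype ι] [DecidableEq ι] [CommRing R]
    (B : Matrix ι ι R) (d : ι → R) :
    (B + diagonal d).det =
      ∑ s : Finset ι, (∏ i ∈ sᶜ, d i) * (B.submatrix ((↑) : s → ι) (↑)).det := by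
  let D : (ι → R) [⋀^ι]→ₗ[R] R := detRowAlternating
  have hrows : ∀ s : Finset ι, s.piecewise B.row (diagonal d).row =
      fun i => (if i ∈ sᶜ then d i else 1) • s.piecewise B.row (1 : Matrix ι ι R).row i := by
    intro s
    ext i j
    by_cases hi : i ∈ s <;> simp [hi, diagonal_apply, one_apply]
  change D (B.row + (diagonal d).row) = _
  rw [D.map_add_univ]
  refine sum_congr rfl fun s _ => ?_
  rw [hrows, D.map_smul_univ, prod_ite_mem, univ_inter, ← det_piecewise_one_eq_submatrix_det]
  rfl

theorem exists_nonneg_forall_mulVec_pos {m n : Type*} [Fintype m] [Fintype n] [DecidableEq m]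
    [DecidableEq n] {A : Matrix m n ℝ} (hA : ∀ y, 0 ≤ y → Aᵀ *ᵥ y ≤ 0 → y = 0) :
    ∃ x, 0 ≤ x ∧ ∀ i, 0 < (A *ᵥ x) i := by
  -- `x` is read off a functional separating `-Aᵀ` of the simplex from the nonnegative orthant.
  set K := (-Aᵀ.mulVecLin) '' stdSimplex ℝ m
  have hKc : IsCompact K :=
    (isCompact_stdSimplex ℝ m).image (LinearMap.continuous_of_finiteDimensional _)
  have hdisj : Disjoint K (ProperCone.positive ℝ (n → ℝ)) := by
    refine Set.disjoint_left.2 ?_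
    rintro _ ⟨y, hy, rfl⟩ hpos
    have h0 := hA y hy.1 (neg_nonneg.1 hpos)
    simpa [h0] using hy.2
  obtain ⟨f, hf_nonneg, hf_neg⟩ :=
    ProperCone.hyperplane_separation _ ((convex_stdSimplex ℝ m).linear_image _) hKc hdisj
  have hf : ∀ v, f v = ∑ j, v j * f (Pi.single j 1) := fun v => by
    conv_lhs => rw [pi_eq_sum_univ' v]
    simp [map_sum]
  refine ⟨fun j => f (Pi.single j 1), fun j => hf_nonneg _ (by simp), fun i => ?_⟩
  have := hf_neg _ ⟨Pi.single i 1, single_mem_stdSimplex ℝ i, rfl⟩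
  rw [hf] at this
  simpa [mulVec, dotProduct] using this

def HasPosPrincipalMinors {ι : Type*} [DecidableEq ι] (A : Matrix ι ι ℝ) : Prop :=
  ∀ s : Finset ι, s.Nonempty → 0 < (A.submatrix ((↑) : s → ι) (↑)).det

namespace HasPosPrincipalMinors

variable {ι κ : Type*} [DecidableEq ι] [DecidableEq κ] {A : Matrix ι ι ℝ}

theorem det_submatrix_pos (hA : A.HasPosPrincipalMinors) [Fintype κ] [Nonempty κ] {f : κ → ι}
    (hf : Function.Injective f) : 0 < (A.submatrix f f).det := by
  let e : κ ≃ (univ.map ⟨f, hf⟩ : Finset ι) :=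
    Equiv.ofBijective (fun k => ⟨f k, mem_map_of_mem _ (mem_univ k)⟩)
      ⟨fun a b h => hf (congrArg Subtype.val h), fun ⟨i, hi⟩ => by
        obtain ⟨k, -, rfl⟩ := mem_map.1 hi; exact ⟨k, rfl⟩⟩
  show 0 < ((A.submatrix ((↑) : (univ.map ⟨f, hf⟩ : Finset ι) → ι) (↑)).submatrix e e).det
  rw [det_submatrix_equiv_self e]
  exact hA _ univ_nonempty.map

theorem submatrix (hA : A.HasPosPrincipalMinors) {f : κ → ι} (hf : Function.Injective f) :
    (A.submatrix f f).HasPosPrincipalMinors := fun s hs => by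
  have := hs.to_subtype
  exact hA.det_submatrix_pos (hf.comp Subtype.val_injective)

theorem transpose (hA : A.HasPosPrincipalMinors) : Aᵀ.HasPosPrincipalMinors := fun s hs => by
  rw [← transpose_submatrix, det_transpose]
  exact hA s hs

theorem add_diagonal (hA : A.HasPosPrincipalMinors) {d : ι → ℝ} (hd : 0 ≤ d) :
    (A + diagonal d).HasPosPrincipalMinors := fun s hs => by
  have hsub : (A + diagonal d).submatrix ((↑) : s → ι) (↑) =
      A.submatrix (↑) (↑) + diagonal (fun i : s => d i) := by
    ext i j
    simp [diagonal_apply]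
  have hB := hA.submatrix (Subtype.val_injective (p := (· ∈ s)))
  rw [hsub, det_add_diagonal]
  refine sum_pos' (fun t _ => mul_nonneg (prod_nonneg fun i _ => hd i) ?_) ⟨univ, mem_univ _, ?_⟩
  · rcases t.eq_empty_or_nonempty with rfl | ht
    · simp
    · exact (hB t ht).le
  · have := hs.to_subtype
    rw [compl_univ, prod_empty, one_mul]
    exact hB univ univ_nonempty

variable [Fintype ι]

theorem diagonal_mul_mul_diagonal (hA : A.HasPosPrincipalMinors) {d : ι → ℝ}
    (hd : ∀ i, d i ≠ 0) : (diagonal d * A * diagonal d).HasPosPrincipalMinors := fun s hs => by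
  have hsub : (diagonal d * A * diagonal d).submatrix ((↑) : s → ι) (↑) =
      diagonal (fun i : s => d i) * A.submatrix (↑) (↑) * diagonal (fun i : s => d i) := by
    ext i j
    simp
  rw [hsub, det_mul, det_mul, det_diagonal, mul_right_comm, ← sq]
  exact mul_pos (sq_pos_of_ne_zero (prod_ne_zero_iff.2 fun i _ => hd i)) (hA s hs)

-- `d` is chosen so that `z`, restricted to its support, lies in the kernel of that principal
-- submatrix of `A + diagonal d` (off the support `d` is `0` by the convention `x / 0 = 0`).
theorem eq_zero_of_nonneg_of_mulVec_nonpos (hA : A.HasPosPrincipalMinors) {z : ι → ℝ}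
    (hz : 0 ≤ z) (hAz : A *ᵥ z ≤ 0) : z = 0 := by
  by_contra hne
  obtain ⟨i₀, hi₀⟩ : ∃ i, z i ≠ 0 := Function.ne_iff.1 hne
  set s := univ.filter (z · ≠ 0)
  have hi₀s : i₀ ∈ s := mem_filter.2 ⟨mem_univ _, hi₀⟩
  set d : ι → ℝ := fun i => -(A *ᵥ z) i / z i
  have hd : 0 ≤ d := fun i => div_nonneg (neg_nonneg.2 (hAz i)) (hz i)
  have hker : (A + diagonal d).submatrix (Subtype.val : s → ι) Subtype.val *ᵥ
      (fun i : s => z i) = 0 := by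
    ext j
    have hj : z j ≠ 0 := (mem_filter.1 j.2).2
    change ∑ i : s, (A + diagonal d) j i * z i = 0
    calc ∑ i : s, (A + diagonal d) j i * z i = ∑ i ∈ s, (A + diagonal d) j i * z i :=
          sum_coe_sort s (fun i => (A + diagonal d) j i * z i)
      _ = ((A + diagonal d) *ᵥ z) j := sum_filter_of_ne fun i _ hi => right_ne_zero_of_mul hi
      _ = 0 := by simp [add_mulVec, mulVec_diagonal, d, div_mul_cancel₀ _ hj]
  refine ((hA.add_diagonal hd) s ⟨i₀, hi₀s⟩).ne' (exists_mulVec_eq_zero_iff.1 ⟨_, ?_, hker⟩)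
  exact fun h => hi₀ (congrFun h ⟨i₀, hi₀s⟩)

theorem exists_nonneg_forall_mulVec_pos (hA : A.HasPosPrincipalMinors) :
    ∃ x, 0 ≤ x ∧ ∀ i, 0 < (A *ᵥ x) i :=
  Matrix.exists_nonneg_forall_mulVec_pos fun _ hy hAy =>
    hA.transpose.eq_zero_of_nonneg_of_mulVec_nonpos hy hAy

end HasPosPrincipalMinors

end Matrix

theorem isPMatrix_iff_hasPosPrincipalMinors {n : ℕ} {A : Matrix (Fin n) (Fin n) ℝ} :
    IsPMatrix A ↔ A.HasPosPrincipalMinors :=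
  Iff.rfl

theorem HasFDerivAt.eventually_eq_of_le_of_apply_le {E : Type*} [NormedAddCommGroup E]
    [NormedSpace ℝ E] [PartialOrder E] [IsOrderedAddMonoid E] {φ : E → ℝ} {ℓ : E →L[ℝ] ℝ}
    {p : E} (hφ : HasFDerivAt φ ℓ p) {c : ℝ} (hc : 0 < c) (hℓ : ∀ v, 0 ≤ v → c * ‖v‖ ≤ ℓ v) :
    ∀ᶠ x in 𝓝 p, p ≤ x → φ x ≤ φ p → x = p := by
  filter_upwards [hφ.isLittleO.bound (half_pos hc)] with x hx hpx hφx
  have hlin := hℓ (x - p) (sub_nonneg.2 hpx)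
  rw [Real.norm_eq_abs, abs_le] at hx
  have : c / 2 * ‖x - p‖ ≤ c / 2 * 0 := by linarith [hx.1]
  exact sub_eq_zero.1 (norm_le_zero_iff.1 (le_of_mul_le_mul_left this (half_pos hc)))

theorem HasFDerivAt.eventually_apply_lt {E ι : Type*} [NormedAddCommGroup E] [NormedSpace ℝ E]
    [Fintype ι] {F : E → ι → ℝ} {F' : E →L[ℝ] ι → ℝ} {x v : E} (hF : HasFDerivAt F F' x)
    (hv : ∀ i, F' v i < 0) : ∀ᶠ t in 𝓝[>] (0 : ℝ), ∀ i, F (x + t • v) i < F x i := by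
  have hline : HasDerivAt (fun t : ℝ => x + t • v) v 0 := by
    simpa using ((hasDerivAt_id (0 : ℝ)).smul_const v).const_add x
  have hcomp : HasDerivAt (fun t : ℝ => F (x + t • v)) (F' v) 0 :=
    HasFDerivAt.comp_hasDerivAt_of_eq 0 hF hline (by simp)
  refine eventually_all.2 fun i => ?_
  have hslope := (hasDerivAt_iff_tendsto_slope.1 (hasDerivAt_pi.1 hcomp i)).mono_left
    (nhdsGT_le_nhdsNE 0)
  filter_upwards [hslope.eventually (eventually_lt_nhds (hv i)), self_mem_nhdsWithin]
    with t hneg (ht : 0 < t)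
  rw [slope_def_field, sub_zero, div_neg_iff] at hneg
  simpa using (hneg.resolve_left fun h => lt_asymm h.2 ht).1

theorem hasFDerivAt_insertNth {m : ℕ} (k : Fin (m + 1)) (c : ℝ) (y : Fin m → ℝ) :
    HasFDerivAt (fun y : Fin m → ℝ => k.insertNth c y)
      (ContinuousLinearMap.pi (k.insertNth (α := fun _ => (Fin m → ℝ) →L[ℝ] ℝ) 0
        (ContinuousLinearMap.proj ·))) y := by
  refine hasFDerivAt_pi.2 fun i => ?_
  induction i using Fin.succAboveCases k with
  | x => simpa using hasFDerivAt_const c y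
  | p j => simpa using hasFDerivAt_apply j y

def HasPMatrixDeriv {ι : Type*} [Fintype ι] [DecidableEq ι] (F : (ι → ℝ) → ι → ℝ) : Prop :=
  ∀ u, ∃ A : Matrix ι ι ℝ, A.HasPosPrincipalMinors ∧
    HasFDerivAt F A.mulVecLin.toContinuousLinearMap u

namespace HasPMatrixDeriv

section

variable {ι : Type*} [Fintype ι] [DecidableEq ι] {F : (ι → ℝ) → ι → ℝ}

theorem continuous (hF : HasPMatrixDeriv F) : Continuous F :=
  continuous_iff_continuousAt.2 fun u =>
    let ⟨_, _, hFA⟩ := hF u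
    hFA.continuousAt

theorem diagonal_conj (hF : HasPMatrixDeriv F) {d : ι → ℝ} (hd : ∀ i, d i ≠ 0) :
    HasPMatrixDeriv fun x => diagonal d *ᵥ F (diagonal d *ᵥ x) := fun x => by
  obtain ⟨A, hA, hFA⟩ := hF (diagonal d *ᵥ x)
  let L := (diagonal d).mulVecLin.toContinuousLinearMap
  refine ⟨diagonal d * A * diagonal d, hA.diagonal_mul_mul_diagonal hd, ?_⟩
  refine (L.hasFDerivAt.comp x (hFA.comp x L.hasFDerivAt)).congr_fderiv ?_
  ext v
  simp [L, mulVec_mulVec]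

theorem eventually_eq_of_le_of_apply_le (hF : HasPMatrixDeriv F) (p : ι → ℝ) :
    ∀ᶠ x in 𝓝 p, p ≤ x → F x ≤ F p → x = p := by
  obtain ⟨A, hA, hFA⟩ := hF p
  obtain ⟨w, hw, hwA⟩ := hA.transpose.exists_nonneg_forall_mulVec_pos
  obtain ⟨c, hcA, hc⟩ := ((eventually_all.2 fun i => eventually_nhdsWithin_of_eventually_nhds
    (eventually_lt_nhds (hwA i))).and self_mem_nhdsWithin).exists (f := 𝓝[>] (0 : ℝ))
  let L := (dotProductBilin ℝ ℝ w).toContinuousLinearMap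
  have hℓ : ∀ v, 0 ≤ v → c * ‖v‖ ≤ (L.comp A.mulVecLin.toContinuousLinearMap) v := by
    intro v hv
    have hnorm : ‖v‖ ≤ ∑ i, v i := (pi_norm_le_iff_of_nonneg (sum_nonneg fun i _ => hv i)).2
      fun i => (Real.norm_of_nonneg (hv i)).trans_le (single_le_sum (fun j _ => hv j) (mem_univ i))
    calc c * ‖v‖ ≤ ∑ i, c * v i := by rw [← mul_sum]; exact mul_le_mul_of_nonneg_left hnorm hc.le
      _ ≤ (Aᵀ *ᵥ w) ⬝ᵥ v := sum_le_sum fun i _ => mul_le_mul_of_nonneg_right (hcA i).le (hv i)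
      _ = (L.comp A.mulVecLin.toContinuousLinearMap) v := by
        rw [mulVec_transpose, ← dotProduct_mulVec]
        rfl
  filter_upwards [(L.hasFDerivAt.comp p hFA).eventually_eq_of_le_of_apply_le hc hℓ]
    with x hx hpx hFx
  exact hx hpx (sum_le_sum fun i _ => mul_le_mul_of_nonneg_left (hFx i) (hw i))

theorem exists_sum_lt [Nonempty ι] (hF : HasPMatrixDeriv F) {p x : ι → ℝ}
    (hpx : ∀ i, p i < x i) :
    ∃ z, (∀ i, p i < z i) ∧ z ≤ x ∧ (∀ i, F z i < F x i) ∧ ∑ i, z i < ∑ i, x i := by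
  obtain ⟨A, hA, hFA⟩ := hF x
  obtain ⟨D, hD, hAD⟩ := hA.exists_nonneg_forall_mulVec_pos
  have hD0 : D ≠ 0 := fun h => (hAD (Classical.arbitrary ι)).ne' (by simp [h])
  obtain ⟨j, hj⟩ := Function.ne_iff.1 hD0
  have hDsum : 0 < ∑ i, D i := sum_pos' (fun i _ => hD i) ⟨j, mem_univ j, (hD j).lt_of_ne' hj⟩
  have hdown := hFA.eventually_apply_lt (v := -D) fun i => by simpa [mulVec_neg] using hAD i
  have habove : ∀ᶠ t in 𝓝[>] (0 : ℝ), ∀ i, p i < (x + t • -D) i :=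
    eventually_all.2 fun i => eventually_nhdsWithin_of_eventually_nhds <|
      ((by fun_prop : Continuous fun t : ℝ => (x + t • -D) i).tendsto' 0 (x i) (by simp)
        ).eventually_const_lt (hpx i)
  obtain ⟨t, ⟨hlt, hpt⟩, ht⟩ := ((hdown.and habove).and self_mem_nhdsWithin).exists
  refine ⟨x + t • -D, hpt, fun i => ?_, hlt, ?_⟩
  · simpa using mul_nonneg (le_of_lt ht) (hD i)
  · simpa [sum_add_distrib, ← mul_sum] using mul_pos ht hDsum

theorem eq_of_le_of_apply_le_of_forall_lt [Nonempty ι] (hF : HasPMatrixDeriv F) {p q : ι → ℝ}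
    (habove : ∀ x, p ≤ x → F x ≤ F p → x ≠ p → ∀ i, p i < x i) (hpq : p ≤ q) (hFq : F q ≤ F p) :
    p = q := by
  by_contra hne
  obtain ⟨ε, hε, hiso⟩ := Metric.eventually_nhds_iff.1 (hF.eventually_eq_of_le_of_apply_le p)
  have hfar : ∀ x, p ≤ x → F x ≤ F p → x ≠ p → ε ≤ dist x p :=
    fun x hpx hFx hxp => not_lt.1 fun h => hxp (hiso h hpx hFx)
  set K := Set.Icc p q ∩ {x | F x ≤ F p ∧ ε ≤ dist x p}
  have hK : IsCompact K := isCompact_Icc.inter_right <|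
    (isClosed_le hF.continuous continuous_const).inter
      (isClosed_le continuous_const (continuous_id.dist continuous_const))
  obtain ⟨x, ⟨⟨hpx, hxq⟩, hFx, hεx⟩, hmin⟩ :=
    hK.exists_isMinOn ⟨q, ⟨hpq, le_rfl⟩, hFq, hfar q hpq hFq (Ne.symm hne)⟩
      (continuous_finsetSum univ fun i _ => continuous_apply i).continuousOn
  have hxp : x ≠ p := by
    rintro rfl
    exact (dist_self x ▸ hεx).not_gt hε
  obtain ⟨z, hpz, hzx, hFz, hsum⟩ := hF.exists_sum_lt (habove x hpx hFx hxp)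
  have hpz' : p ≤ z := fun i => (hpz i).le
  have hFz' : F z ≤ F p := fun i => (hFz i).le.trans (hFx i)
  have hzp : z ≠ p := fun h => (hpz (Classical.arbitrary ι)).ne (by rw [h])
  exact (hmin ⟨⟨hpz', hzx.trans hxq⟩, hFz', hfar z hpz' hFz' hzp⟩).not_gt hsum

end

theorem restrict_insertNth {m : ℕ} {F : (Fin (m + 1) → ℝ) → Fin (m + 1) → ℝ}
    (hF : HasPMatrixDeriv F) (k : Fin (m + 1)) (c : ℝ) :
    HasPMatrixDeriv fun y j => F (k.insertNth c y) (k.succAbove j) := fun y => by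
  obtain ⟨A, hA, hFA⟩ := hF (k.insertNth c y)
  refine ⟨A.submatrix k.succAbove k.succAbove, hA.submatrix Fin.succAbove_right_injective,
    hasFDerivAt_pi'.2 fun j => ?_⟩
  refine (hasFDerivAt_pi'.1 (hFA.comp y (hasFDerivAt_insertNth k c y))
    (k.succAbove j)).congr_fderiv ?_
  ext v
  simp [mulVec, dotProduct, Fin.sum_univ_succAbove _ k]

theorem eq_of_le_of_apply_le {n : ℕ} {F : (Fin n → ℝ) → Fin n → ℝ} (hF : HasPMatrixDeriv F)
    {p q : Fin n → ℝ} (hpq : p ≤ q) (hFq : F q ≤ F p) : p = q := by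
  induction n with
  | zero => exact Subsingleton.elim p q
  | succ m ih =>
    refine hF.eq_of_le_of_apply_le_of_forall_lt (fun x hpx hFx hxp k => ?_) hpq hFq
    refine (hpx k).lt_of_ne fun hk => hxp ?_
    have hx : k.insertNth (p k) (k.removeNth x) = x := by rw [hk, Fin.insertNth_self_removeNth]
    have hp : k.insertNth (p k) (k.removeNth p) = p := Fin.insertNth_self_removeNth k p
    have hface := ih (hF.restrict_insertNth k (p k)) (p := k.removeNth p) (q := k.removeNth x)
      (fun j => hpx _) (by rw [hx, hp]; exact fun j => hFx _)
    rw [← hx, ← hface, hp]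

end HasPMatrixDeriv

theorem galeNikaido_injective_general {n : ℕ} (F : (Fin n → ℝ) → (Fin n → ℝ))
    (J : (Fin n → ℝ) → Matrix (Fin n) (Fin n) ℝ)
    (hderiv : ∀ u, HasFDerivAt F
      (LinearMap.toContinuousLinearMap (Matrix.mulVecLin (J u))) u)
    (hP : ∀ u, IsPMatrix (J u)) :
    Function.Injective F := by
  have hF : HasPMatrixDeriv F :=
    fun u => ⟨J u, isPMatrix_iff_hasPosPrincipalMinors.1 (hP u), hderiv u⟩
  intro a b hab
  set e : Fin n → ℝ := fun i => if a i ≤ b i then 1 else -1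
  have he : ∀ i, e i * e i = 1 := fun i => by by_cases h : a i ≤ b i <;> simp [e, h]
  have hinv : ∀ x, diagonal e *ᵥ (diagonal e *ᵥ x) = x := fun x => by
    ext i
    simp [mulVec_diagonal, ← mul_assoc, he]
  have hle : diagonal e *ᵥ a ≤ diagonal e *ᵥ b := fun i => by
    by_cases h : a i ≤ b i <;> simp [e, h, mulVec_diagonal]
    linarith
  have := (hF.diagonal_conj fun i => left_ne_zero_of_mul_eq_one (he i)).eq_of_le_of_apply_le hle
    (by simp [hinv, hab])
  simpa [hinv] using congrArg (diagonal e *ᵥ ·) this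

/-- Gale–Nikaido global univalence: a C¹ map on ℝⁿ whose Jacobian is everywhere a
P-matrix is injective. -/
theorem galeNikaido_injective {n : ℕ} (F : (Fin n → ℝ) → (Fin n → ℝ))
    (J : (Fin n → ℝ) → Matrix (Fin n) (Fin n) ℝ)
    (hC1 : ContDiff ℝ 1 F)
    (hderiv : ∀ u, HasFDerivAt F
      (LinearMap.toContinuousLinearMap (Matrix.mulVecLin (J u))) u)
    (hP : ∀ u, IsPMatrix (J u)) :
    Function.Injective F :=
  galeNikaido_injective_general F J hderiv hP
end

section
/- In a linearly separable affective interaction with I − J invertible, an action profile x* is a Nash equilibrium of the induced game U(x) = (I − J)^{-1} f(x) if and only if (x*, U(x*)) is a parametric equilibrium of V, provided I − J is a P-matrix (so the diagonal of (I − J)^{-1} is positive). -/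
namespace IsPMatrix

variable {n : ℕ} {A : Matrix (Fin n) (Fin n) ℝ}

theorem det_submatrix_pos (hA : IsPMatrix A) {m : ℕ} (e : Fin m ↪ Fin n) :
    0 < (A.submatrix e e).det := by
  rcases Nat.eq_zero_or_pos m with rfl | hm
  · simp
  let σ : Fin m ≃ Finset.univ.map e :=
    (Equiv.subtypeUnivEquiv Finset.mem_univ).symm.trans (Finset.equivMap e Finset.univ)
  have hS : (Finset.univ.map e).Nonempty := Finset.univ_nonempty_iff.2 ⟨⟨0, hm⟩⟩ |>.map
  have hminor := hA _ hS
  rw [← Matrix.det_submatrix_equiv_self σ] at hminor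
  simpa [Matrix.submatrix_submatrix, Function.comp_def, σ] using hminor

theorem det_pos (hA : IsPMatrix A) : 0 < A.det :=
  hA.det_submatrix_pos (Function.Embedding.refl _)

theorem inv_apply_self_pos (hA : IsPMatrix A) (i : Fin n) : 0 < A⁻¹ i i := by
  obtain ⟨m, rfl⟩ := Nat.exists_eq_succ_of_ne_zero i.pos.ne'
  have hadj : 0 < A.adjugate i i := by
    rw [Matrix.adjugate_fin_succ_eq_det_submatrix, Even.neg_one_pow ⟨i, rfl⟩, one_mul]
    exact hA.det_submatrix_pos i.succAboveEmb
  rw [Matrix.inv_def, Matrix.smul_apply, smul_eq_mul, Ring.inverse_eq_inv']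
  exact mul_pos (inv_pos.2 hA.det_pos) hadj

end IsPMatrix

open Matrix in
theorem Matrix.mulVec_update_apply {ι R : Type*} [Fintype ι] [DecidableEq ι]
    [NonUnitalNonAssocRing R] (B : Matrix ι ι R) (v : ι → R) (j : ι) (a : R) (k : ι) :
    (B *ᵥ Function.update v j a) k = (B *ᵥ v) k + B k j * (a - v j) := by
  have hupd : Function.update v j a = v + Pi.single j (a - v j) := by
    ext l; rcases eq_or_ne l j with rfl | h <;> simp [*]
  rw [hupd, mulVec_add, Pi.add_apply, mulVec, mulVec, dotProduct_single]

theorem nash_iff_parametric_linear_general {n : ℕ} (J : Matrix (Fin n) (Fin n) ℝ)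
    (hP : IsPMatrix (1 - J))
    (X : Fin n → Type*) (f : ∀ i, X i → ℝ) (xs : ∀ i, X i) :
    (∀ (i : Fin n) (xi : X i),
        (1 - J)⁻¹.mulVec (fun j => f j (Function.update xs i xi j)) i ≤
          (1 - J)⁻¹.mulVec (fun j => f j (xs j)) i) ↔
      (∀ (i : Fin n) (xi : X i),
        f i xi + ∑ j ∈ Finset.univ.erase i,
            J i j * (1 - J)⁻¹.mulVec (fun k => f k (xs k)) j ≤
          f i (xs i) + ∑ j ∈ Finset.univ.erase i,
            J i j * (1 - J)⁻¹.mulVec (fun k => f k (xs k)) j) := by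
  refine forall₂_congr fun i xi => ?_
  simp only [Function.apply_update f xs i xi, Matrix.mulVec_update_apply, add_le_add_iff_right,
    add_le_iff_nonpos_right]
  rw [← mul_zero ((1 - J)⁻¹ i i), mul_le_mul_iff_right₀ (hP.inv_apply_self_pos i), sub_nonpos]

/-- In a linearly separable affective interaction with I − J a P-matrix, x* is a Nash
equilibrium of the induced game U(x) = (I−J)⁻¹ f(x) iff (x*, U(x*)) is a parametric
equilibrium of V_i(x_i,u) = f_i(x_i) + Σ_{j≠i} J_{ij} u_j. -/
theorem nash_iff_parametric_linear {n : ℕ} (J : Matrix (Fin n) (Fin n) ℝ)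
    (hdiag : ∀ i, J i i = 0) (hunit : IsUnit (1 - J).det) (hP : IsPMatrix (1 - J))
    (X : Fin n → Type*) (f : ∀ i, X i → ℝ) (xs : ∀ i, X i) :
    (∀ (i : Fin n) (xi : X i),
        (1 - J)⁻¹.mulVec (fun j => f j (Function.update xs i xi j)) i ≤
          (1 - J)⁻¹.mulVec (fun j => f j (xs j)) i) ↔
      (∀ (i : Fin n) (xi : X i),
        f i xi + ∑ j ∈ Finset.univ.erase i,
            J i j * (1 - J)⁻¹.mulVec (fun k => f k (xs k)) j ≤
          f i (xs i) + ∑ j ∈ Finset.univ.erase i,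
            J i j * (1 - J)⁻¹.mulVec (fun k => f k (xs k)) j) :=
  nash_iff_parametric_linear_general J hP X f xs
end

section
/- Let a = 2, b = 1/4 (so ab < 1), and define U₁(x₁,x₂) = (1/(1−ab))(√x₁ + a√x₂) and U₂(x₁,x₂) = (1/(1−ab))(b√x₁ + √x₂) for x₁, x₂ > 0 with x₁ + x₂ = 2. Then the allocation x₁ = x₂ = 1 is not Pareto optimal subject to the feasibility constraint x₁ + x₂ = 2: there exists a feasible (x̃₁, x̃₂) with U₁(x̃) > U₁(1,1) and U₂(x̃) > U₂(1,1). -/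
/-- Love and Spaghetti with a = 2, b = 1/4: the equal-split allocation (1,1) is not
Pareto optimal subject to x₁ + x₂ = 2. -/
theorem spaghetti_not_pareto_optimal
    (U1 U2 : ℝ → ℝ → ℝ)
    (hU1 : ∀ x1 x2, U1 x1 x2 =
      (1 / (1 - (2:ℝ) * (1/4))) * (Real.sqrt x1 + 2 * Real.sqrt x2))
    (hU2 : ∀ x1 x2, U2 x1 x2 =
      (1 / (1 - (2:ℝ) * (1/4))) * ((1/4) * Real.sqrt x1 + Real.sqrt x2)) :
    ∃ x1 x2 : ℝ, 0 < x1 ∧ 0 < x2 ∧ x1 + x2 = 2 ∧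
      U1 1 1 < U1 x1 x2 ∧ U2 1 1 < U2 x1 x2 := by
  have h1 : Real.sqrt (49/169) = 7/13 := by
    rw [show (49/169:ℝ) = (7/13)^2 by norm_num, Real.sqrt_sq (by norm_num)]
  have h2 : Real.sqrt (289/169) = 17/13 := by
    rw [show (289/169:ℝ) = (17/13)^2 by norm_num, Real.sqrt_sq (by norm_num)]
  refine ⟨49/169, 289/169, by norm_num, by norm_num, by norm_num, ?_, ?_⟩
  · rw [hU1, hU1, h1, h2, Real.sqrt_one]; norm_num
  · rw [hU2, hU2, h1, h2, Real.sqrt_one]; norm_num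
end
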